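/- arXiv:2302.06497 — 5 statements merged into one kernel-verified Lean document; each statement's English description precedes it below -/
import Mathlib

section
/- Let ψ : ℝⁿ → ℝⁿ be monotone and r : ℝⁿ → ℝ ∪ {∞} proper, convex, lower semicontinuous with maximally monotone subdifferential ∂r. Suppose the mixed variational inequality MVI(ψ, r) (find x* with ⟨ψ(x*), y - x*⟩ + r(y) - r(x*) ≥ 0 for all y) has a solution x*. If, for η > 0, x(η) denotes the unique solution of MVI(ψ + η·Id, r), then ‖x(η)‖ ≤ ‖x*‖. Consequently ‖x(η)‖ ≤ inf{‖x‖ : x solves MVI(ψ, r)}. -/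
open scoped RealInnerProductSpace

/-- `x` solves the mixed variational inequality `MVI(ψ, r)`:
`⟨ψ(x), y - x⟩ + r(y) - r(x) ≥ 0` for all `y`. -/
def MVISol {n : ℕ} (ψ : EuclideanSpace ℝ (Fin n) → EuclideanSpace ℝ (Fin n))
    (r : EuclideanSpace ℝ (Fin n) → EReal) (x : EuclideanSpace ℝ (Fin n)) : Prop :=
  ∀ y, r x ≤ ((⟪ψ x, y - x⟫ : ℝ) : EReal) + r y

private lemma key {n : ℕ}
    (ψ : EuclideanSpace ℝ (Fin n) → EuclideanSpace ℝ (Fin n))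
    (r : EuclideanSpace ℝ (Fin n) → EReal)
    (hmono : ∀ x y, 0 ≤ ⟪ψ x - ψ y, x - y⟫)
    (hbot : ∀ x, r x ≠ ⊥) (htop : ∃ x, r x ≠ ⊤)
    {η : ℝ} (hη : 0 < η)
    (xstar xeta : EuclideanSpace ℝ (Fin n))
    (hxstar : MVISol ψ r xstar)
    (hxeta : MVISol (fun x => ψ x + η • x) r xeta) :
    ‖xeta‖ ≤ ‖xstar‖ := by
  obtain ⟨y0, hy0⟩ := htop
  have hst : r xstar ≠ ⊤ := by
    intro h
    have := hxstar y0
    rw [h, top_le_iff] at this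
    exact (EReal.add_lt_top (EReal.coe_ne_top _) hy0).ne this
  have het : r xeta ≠ ⊤ := by
    intro h
    have := hxeta y0
    rw [h, top_le_iff] at this
    exact (EReal.add_lt_top (EReal.coe_ne_top _) hy0).ne this
  set A := (r xstar).toReal with hA
  set B := (r xeta).toReal with hB
  have hAe : r xstar = (A : EReal) := (EReal.coe_toReal hst (hbot _)).symm
  have hBe : r xeta = (B : EReal) := (EReal.coe_toReal het (hbot _)).symm
  have h1 : A ≤ ⟪ψ xstar, xeta - xstar⟫ + B := by
    have := hxstar xeta
    rw [hAe, hBe, ← EReal.coe_add, EReal.coe_le_coe_iff] at this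
    exact this
  have h2 : B ≤ ⟪ψ xeta + η • xeta, xstar - xeta⟫ + A := by
    have := hxeta xstar
    rw [hAe, hBe, ← EReal.coe_add, EReal.coe_le_coe_iff] at this
    exact this
  have hmono' := hmono xstar xeta
  have hexp : ⟪ψ xeta + η • xeta, xstar - xeta⟫
      = ⟪ψ xeta, xstar - xeta⟫ + η * ⟪xeta, xstar - xeta⟫ := by
    rw [inner_add_left, real_inner_smul_left]
  have hsub : ⟪ψ xstar - ψ xeta, xstar - xeta⟫
      = ⟪ψ xstar, xstar - xeta⟫ - ⟪ψ xeta, xstar - xeta⟫ := by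
    rw [inner_sub_left]
  have hneg : ⟪ψ xstar, xeta - xstar⟫ = -⟪ψ xstar, xstar - xeta⟫ := by
    rw [← inner_neg_right, neg_sub]
  have hkey : 0 ≤ ⟪xeta, xstar - xeta⟫ := by
    nlinarith [h1, h2, hmono', hexp, hsub, hneg]
  have hin : ⟪xeta, xstar - xeta⟫ = ⟪xeta, xstar⟫ - ‖xeta‖ ^ 2 := by
    rw [inner_sub_right, real_inner_self_eq_norm_sq]
  have hcs : ⟪xeta, xstar⟫ ≤ ‖xeta‖ * ‖xstar‖ := real_inner_le_norm _ _
  nlinarith [norm_nonneg xeta, norm_nonneg xstar, hkey, hin, hcs]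

/-- Tikhonov boundedness: the unique solution `x(η)` of the regularized problem
`MVI(ψ + η·Id, r)` satisfies `‖x(η)‖ ≤ ‖x*‖` for every solution `x*` of `MVI(ψ, r)`;
consequently `‖x(η)‖` is bounded by the infimum of norms of solutions. -/
theorem tikhonov_bounded {n : ℕ}
    (ψ : EuclideanSpace ℝ (Fin n) → EuclideanSpace ℝ (Fin n))
    (r : EuclideanSpace ℝ (Fin n) → EReal)
    (hmono : ∀ x y, 0 ≤ ⟪ψ x - ψ y, x - y⟫)
    (hbot : ∀ x, r x ≠ ⊥) (htop : ∃ x, r x ≠ ⊤)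
    (hconv : ∀ x y (a b : ℝ), 0 ≤ a → 0 ≤ b → a + b = 1 →
      r (a • x + b • y) ≤ (a : EReal) * r x + (b : EReal) * r y)
    (hlsc : LowerSemicontinuous r)
    {η : ℝ} (hη : 0 < η)
    (xstar xeta : EuclideanSpace ℝ (Fin n))
    (hxstar : MVISol ψ r xstar)
    (hxeta : MVISol (fun x => ψ x + η • x) r xeta) :
    ‖xeta‖ ≤ ‖xstar‖ ∧
      ‖xeta‖ ≤ sInf ((fun z => ‖z‖) '' {z | MVISol ψ r z}) := by
  have main : ∀ z, MVISol ψ r z → ‖xeta‖ ≤ ‖z‖ := fun z hz =>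
    key ψ r hmono hbot htop hη z xeta hz hxeta
  refine ⟨main xstar hxstar, le_csInf ⟨‖xstar‖, ⟨xstar, hxstar, rfl⟩⟩ ?_⟩
  rintro b ⟨z, hz, rfl⟩
  exact main z hz
end

section
/- Let ψ : ℝⁿ → ℝⁿ be monotone, r : ℝⁿ → ℝ ∪ {∞} proper convex lsc, and suppose MVI(ψ, r) has a nonempty solution set S. Let η_t be a positive decreasing sequence with η_t ↓ 0 and let x_t = x(η_t) denote the unique solution of the regularized problem MVI(ψ + η_t Id, r). Then for every t: η_t ‖x_t - x_{t-1}‖² ≤ (η_{t-1} - η_t)‖x_{t-1}‖·‖x_t - x_{t-1}‖, hence ‖x_t - x_{t-1}‖ ≤ ((η_{t-1} - η_t)/η_t)·inf{‖x‖ : x ∈ S}. -/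
open scoped RealInnerProductSpace

lemma mvisol_fin {n : ℕ} {ψ : EuclideanSpace ℝ (Fin n) → EuclideanSpace ℝ (Fin n)}
    {r : EuclideanSpace ℝ (Fin n) → EReal}
    (hbot : ∀ x, r x ≠ ⊥) (htop : ∃ x, r x ≠ ⊤)
    {x : EuclideanSpace ℝ (Fin n)} (h : MVISol ψ r x) : ∃ a : ℝ, r x = (a : EReal) := by
  obtain ⟨y₀, hy₀⟩ := htop
  have h1 := h y₀
  have hne : r x ≠ ⊤ := by
    intro hT
    rw [hT] at h1
    exact absurd (top_le_iff.mp h1)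
      (EReal.add_lt_top (EReal.coe_ne_top _) hy₀).ne
  exact ⟨(r x).toReal, (EReal.coe_toReal hne (hbot x)).symm⟩

/-- Adding the two MVI inequalities for two (possibly different) operators. -/
lemma mvisol_pair {n : ℕ} {ψ₁ ψ₂ : EuclideanSpace ℝ (Fin n) → EuclideanSpace ℝ (Fin n)}
    {r : EuclideanSpace ℝ (Fin n) → EReal}
    (hbot : ∀ x, r x ≠ ⊥) (htop : ∃ x, r x ≠ ⊤)
    {u v : EuclideanSpace ℝ (Fin n)}
    (h₁ : MVISol ψ₁ r u) (h₂ : MVISol ψ₂ r v) :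
    0 ≤ ⟪ψ₁ u, v - u⟫ + ⟪ψ₂ v, u - v⟫ := by
  obtain ⟨a, ha⟩ := mvisol_fin hbot htop h₁
  obtain ⟨b, hb⟩ := mvisol_fin hbot htop h₂
  have e1 := h₁ v
  have e2 := h₂ u
  rw [ha, hb, ← EReal.coe_add, EReal.coe_le_coe_iff] at e1
  rw [hb, ha, ← EReal.coe_add, EReal.coe_le_coe_iff] at e2
  linarith

/-- Rate of change of the Tikhonov trajectory: for a positive decreasing sequence
`η_t ↓ 0` and `x_t` the solution of `MVI(ψ + η_t Id, r)`,
`η_t ‖x_t - x_{t-1}‖² ≤ (η_{t-1} - η_t) ‖x_{t-1}‖ ‖x_t - x_{t-1}‖`, and hence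
`‖x_t - x_{t-1}‖ ≤ ((η_{t-1} - η_t)/η_t) · inf{‖x‖ : x ∈ S}`. -/
theorem tikhonov_rate {n : ℕ}
    (ψ : EuclideanSpace ℝ (Fin n) → EuclideanSpace ℝ (Fin n))
    (r : EuclideanSpace ℝ (Fin n) → EReal)
    (hmono : ∀ x y, 0 ≤ ⟪ψ x - ψ y, x - y⟫)
    (hbot : ∀ x, r x ≠ ⊥) (htop : ∃ x, r x ≠ ⊤)
    (hconv : ∀ x y (a b : ℝ), 0 ≤ a → 0 ≤ b → a + b = 1 →
      r (a • x + b • y) ≤ (a : EReal) * r x + (b : EReal) * r y)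
    (hlsc : LowerSemicontinuous r)
    (hS : ∃ z, MVISol ψ r z)
    (η : ℕ → ℝ) (hηpos : ∀ t, 0 < η t) (hηdec : StrictAnti η)
    (hη0 : Filter.Tendsto η Filter.atTop (nhds 0))
    (x : ℕ → EuclideanSpace ℝ (Fin n))
    (hx : ∀ t, MVISol (fun z => ψ z + η t • z) r (x t)) :
    ∀ t : ℕ,
      η (t + 1) * ‖x (t + 1) - x t‖ ^ 2
        ≤ (η t - η (t + 1)) * ‖x t‖ * ‖x (t + 1) - x t‖ ∧
      ‖x (t + 1) - x t‖
        ≤ ((η t - η (t + 1)) / η (t + 1)) * sInf ((fun z => ‖z‖) '' {z | MVISol ψ r z}) := by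
  -- the iterates are bounded by the norm of any solution
  have hbound : ∀ t z, MVISol ψ r z → ‖x t‖ ≤ ‖z‖ := by
    intro t z hz
    have key := mvisol_pair hbot htop (hx t) hz
    have hm := hmono (x t) z
    have expand : ⟪ψ (x t) + η t • x t, z - x t⟫ + ⟪ψ z, x t - z⟫
        = -⟪ψ (x t) - ψ z, x t - z⟫ + η t * ⟪x t, z - x t⟫ := by
      simp only [inner_add_left, inner_sub_left, inner_sub_right, real_inner_smul_left]
      ring
    rw [expand] at key
    have h2 : 0 ≤ ⟪x t, z - x t⟫ := by
      have := hηpos t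
      nlinarith
    rw [inner_sub_right, real_inner_self_eq_norm_sq] at h2
    have h3 : ‖x t‖ ^ 2 ≤ ‖x t‖ * ‖z‖ := by
      have := real_inner_le_norm (x t) z
      nlinarith
    rcases eq_or_lt_of_le (norm_nonneg (x t)) with h | h
    · rw [← h]; exact norm_nonneg z
    · nlinarith
  intro t
  set u := x (t + 1)
  set v := x t
  set d := ‖u - v‖
  have hd : 0 ≤ d := norm_nonneg _
  have hηd : 0 < η t - η (t + 1) := sub_pos.mpr (hηdec (Nat.lt_succ_self t))
  have key := mvisol_pair hbot htop (hx (t + 1)) (hx t)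
  have expand : ⟪ψ u + η (t + 1) • u, v - u⟫ + ⟪ψ v + η t • v, u - v⟫
      = -⟪ψ u - ψ v, u - v⟫ - η (t + 1) * ⟪u - v, u - v⟫
        + (η t - η (t + 1)) * ⟪v, u - v⟫ := by
    simp only [inner_add_left, inner_sub_left, inner_sub_right, real_inner_smul_left]
    rw [real_inner_comm v u]
    ring
  rw [expand] at key
  have hm := hmono u v
  have hcs : ⟪v, u - v⟫ ≤ ‖v‖ * d := real_inner_le_norm v (u - v)
  have hself : ⟪u - v, u - v⟫ = d ^ 2 := by
    rw [real_inner_self_eq_norm_sq]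
  rw [hself] at key
  have main : η (t + 1) * d ^ 2 ≤ (η t - η (t + 1)) * ‖v‖ * d := by
    nlinarith
  refine ⟨main, ?_⟩
  -- second part
  obtain ⟨z₀, hz₀⟩ := hS
  have hne : ((fun z => ‖z‖) '' {z | MVISol ψ r z}).Nonempty := ⟨‖z₀‖, z₀, hz₀, rfl⟩
  have hInf : ‖v‖ ≤ sInf ((fun z => ‖z‖) '' {z | MVISol ψ r z}) := by
    apply le_csInf hne
    rintro b ⟨z, hz, rfl⟩
    exact hbound t z hz
  have hInfnn : 0 ≤ sInf ((fun z => ‖z‖) '' {z | MVISol ψ r z}) :=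
    le_trans (norm_nonneg v) hInf
  rcases eq_or_lt_of_le hd with h0 | h0
  · rw [← h0]
    exact mul_nonneg (div_nonneg hηd.le (hηpos _).le) hInfnn
  · have h1 : d ≤ ((η t - η (t + 1)) / η (t + 1)) * ‖v‖ := by
      rw [div_mul_eq_mul_div, le_div_iff₀ (hηpos (t + 1))]
      nlinarith
    calc d ≤ ((η t - η (t + 1)) / η (t + 1)) * ‖v‖ := h1
      _ ≤ ((η t - η (t + 1)) / η (t + 1)) * sInf ((fun z => ‖z‖) '' {z | MVISol ψ r z}) := by
        exact mul_le_mul_of_nonneg_left hInf (div_nonneg hηd.le (hηpos _).le)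
end

section
/- Let ψ : ℝⁿ → ℝⁿ be continuous and monotone, r proper convex lsc with maximally monotone subdifferential, and suppose the solution set S of MVI(ψ, r) is nonempty. Then every accumulation point of the Tikhonov net {x(η)}_{η>0} as η → 0⁺ is a solution of MVI(ψ, r). -/
open scoped RealInnerProductSpace

/-- Every accumulation point of the Tikhonov net `{x(η)}` as `η → 0⁺` is a solution
of `MVI(ψ, r)`. -/
theorem tikhonov_accumulation {n : ℕ}
    (ψ : EuclideanSpace ℝ (Fin n) → EuclideanSpace ℝ (Fin n))
    (hcont : Continuous ψ)
    (hmono : ∀ x y, 0 ≤ ⟪ψ x - ψ y, x - y⟫)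
    (r : EuclideanSpace ℝ (Fin n) → EReal)
    (hbot : ∀ x, r x ≠ ⊥) (htop : ∃ x, r x ≠ ⊤)
    (hconv : ∀ x y (a b : ℝ), 0 ≤ a → 0 ≤ b → a + b = 1 →
      r (a • x + b • y) ≤ (a : EReal) * r x + (b : EReal) * r y)
    (hlsc : LowerSemicontinuous r)
    (hS : ∃ z, MVISol ψ r z)
    (η : ℕ → ℝ) (hηpos : ∀ t, 0 < η t)
    (hη0 : Filter.Tendsto η Filter.atTop (nhds 0))
    (x : ℕ → EuclideanSpace ℝ (Fin n))
    (hx : ∀ t, MVISol (fun z => ψ z + η t • z) r (x t))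
    (xhat : EuclideanSpace ℝ (Fin n))
    (hlim : Filter.Tendsto x Filter.atTop (nhds xhat)) :
    MVISol ψ r xhat := by
  intro y
  rcases eq_or_ne (r y) ⊤ with hy | hy
  · rw [hy, EReal.add_top_of_ne_bot (EReal.coe_ne_bot _)]
    exact le_top
  obtain ⟨c, hc⟩ : ∃ c : ℝ, r y = (c : EReal) :=
    ⟨(r y).toReal, (EReal.coe_toReal hy (hbot y)).symm⟩
  set L : ℝ := ⟪ψ xhat, y - xhat⟫ with hL
  -- the perturbed inner products converge to L
  have ha : Filter.Tendsto (fun t => (⟪ψ (x t) + η t • x t, y - x t⟫ : ℝ))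
      Filter.atTop (nhds L) := by
    have h1 : Filter.Tendsto (fun t => ψ (x t) + η t • x t) Filter.atTop
        (nhds (ψ xhat + (0 : ℝ) • xhat)) :=
      Filter.Tendsto.add ((hcont.tendsto xhat).comp hlim) (hη0.smul hlim)
    rw [zero_smul, add_zero] at h1
    have h2 : Filter.Tendsto (fun t => y - x t) Filter.atTop (nhds (y - xhat)) :=
      Filter.Tendsto.sub tendsto_const_nhds hlim
    exact h1.inner h2
  -- key bound at each t
  have hrt : ∀ t, r (x t) ≤ (((⟪ψ (x t) + η t • x t, y - x t⟫ : ℝ) + c : ℝ) : EReal) := by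
    intro t
    have := hx t y
    rw [hc] at this
    simpa [EReal.coe_add] using this
  rw [hc, ← EReal.coe_add]
  refine le_of_forall_lt_imp_le_of_dense ?_
  intro b hb
  have hev : ∀ᶠ t in Filter.atTop, b < r (x t) :=
    hlim.eventually (hlsc xhat b hb)
  have hev2 : ∀ᶠ t in Filter.atTop,
      b ≤ (((⟪ψ (x t) + η t • x t, y - x t⟫ : ℝ) + c : ℝ) : EReal) :=
    hev.mono fun t ht => (ht.trans_le (hrt t)).le
  have hlim2 : Filter.Tendsto
      (fun t => ((((⟪ψ (x t) + η t • x t, y - x t⟫ : ℝ) + c : ℝ)) : EReal))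
      Filter.atTop (nhds ((L + c : ℝ) : EReal)) := by
    exact (continuous_coe_real_ereal.tendsto _).comp (ha.add tendsto_const_nhds)
  exact ge_of_tendsto hlim2 hev2
end

section
/- Let ψ : ℝⁿ → ℝⁿ be continuous and monotone and r proper convex lsc, and assume MVI(ψ, r) has nonempty solution set S. Then S is closed and convex, the minimum-norm problem min{‖x‖ : x ∈ S} has a unique solution x̄, and for any η_t ↓ 0 the Tikhonov trajectory x(η_t) converges to x̄. -/
open scoped RealInnerProductSpace

open Filter

section Aux

variable {n : ℕ} {ψ : EuclideanSpace ℝ (Fin n) → EuclideanSpace ℝ (Fin n)}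
  {r : EuclideanSpace ℝ (Fin n) → EReal}

/-- lsc passage to the limit along a sequence with real upper bounds. -/
lemma lsc_limit (hlsc : LowerSemicontinuous r) {y : ℕ → EuclideanSpace ℝ (Fin n)}
    {a : EuclideanSpace ℝ (Fin n)} {c : ℕ → ℝ} {C : ℝ}
    (hy : Tendsto y atTop (nhds a)) (hc : Tendsto c atTop (nhds C))
    (h : ∀ k, r (y k) ≤ ((c k : ℝ) : EReal)) : r a ≤ (C : EReal) := by
  by_contra hlt
  push_neg at hlt
  obtain ⟨c', h1, h2⟩ := EReal.exists_between_coe_real hlt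
  have hCc' : C < c' := by exact_mod_cast h1
  have hev1 : ∀ᶠ k in atTop, (c' : EReal) < r (y k) := hy.eventually (hlsc a _ h2)
  have hev2 : ∀ᶠ k in atTop, c k < c' := hc.eventually (gt_mem_nhds hCc')
  obtain ⟨k, hk1, hk2⟩ := (hev1.and hev2).exists
  have : r (y k) < r (y k) :=
    lt_of_le_of_lt (h k) (lt_trans (by exact_mod_cast hk2) hk1)
  exact lt_irrefl _ this

/-- a solution of any MVI has finite `r`-value. -/
lemma sol_finite {φ : EuclideanSpace ℝ (Fin n) → EuclideanSpace ℝ (Fin n)}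
    (hbot : ∀ x, r x ≠ ⊥) {y₀ : EuclideanSpace ℝ (Fin n)} (hy₀ : r y₀ ≠ ⊤)
    {x : EuclideanSpace ℝ (Fin n)} (hx : MVISol φ r x) : ∃ a : ℝ, r x = (a : EReal) := by
  have h := hx y₀
  have hb : r y₀ = ((r y₀).toReal : EReal) := (EReal.coe_toReal hy₀ (hbot y₀)).symm
  have htop' : r x ≠ ⊤ := by
    intro hT
    rw [hT, hb, ← EReal.coe_add] at h
    exact (EReal.coe_lt_top _).not_ge h
  exact ⟨(r x).toReal, (EReal.coe_toReal htop' (hbot x)).symm⟩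

/-- Minty: forward direction. -/
lemma minty_fwd (hmono : ∀ x y, 0 ≤ ⟪ψ x - ψ y, x - y⟫)
    {x : EuclideanSpace ℝ (Fin n)} (hx : MVISol ψ r x) :
    ∀ y, r x ≤ ((⟪ψ y, y - x⟫ : ℝ) : EReal) + r y := by
  intro y
  refine (hx y).trans (add_le_add_left ?_ _)
  have h := hmono y x
  rw [inner_sub_left] at h
  exact EReal.coe_le_coe_iff.mpr (by linarith)

/-- Minty: reverse direction. -/
lemma minty_rev (hcont : Continuous ψ) (hbot : ∀ x, r x ≠ ⊥)
    (hconv : ∀ x y (a b : ℝ), 0 ≤ a → 0 ≤ b → a + b = 1 →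
      r (a • x + b • y) ≤ (a : EReal) * r x + (b : EReal) * r y)
    {y₀ : EuclideanSpace ℝ (Fin n)} (hy₀ : r y₀ ≠ ⊤)
    {x : EuclideanSpace ℝ (Fin n)}
    (hx : ∀ y, r x ≤ ((⟪ψ y, y - x⟫ : ℝ) : EReal) + r y) : MVISol ψ r x := by
  have hb0 : r y₀ = ((r y₀).toReal : EReal) := (EReal.coe_toReal hy₀ (hbot y₀)).symm
  have hxtop : r x ≠ ⊤ := by
    intro hT
    have h := hx y₀
    rw [hT, hb0, ← EReal.coe_add] at h
    exact (EReal.coe_lt_top _).not_ge h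
  obtain ⟨a, ha⟩ : ∃ a : ℝ, r x = (a : EReal) :=
    ⟨(r x).toReal, (EReal.coe_toReal hxtop (hbot x)).symm⟩
  intro z
  by_cases hz : r z = ⊤
  · rw [hz, EReal.coe_add_top]
    exact le_top
  obtain ⟨c, hc⟩ : ∃ c : ℝ, r z = (c : EReal) :=
    ⟨(r z).toReal, (EReal.coe_toReal hz (hbot z)).symm⟩
  rw [ha, hc, ← EReal.coe_add, EReal.coe_le_coe_iff]
  set t : ℕ → ℝ := fun k => ((k : ℝ) + 1)⁻¹ with ht
  have htpos : ∀ k, 0 < t k := fun k => by positivity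
  have htle : ∀ k, t k ≤ 1 := by
    intro k
    rw [ht]
    simp only
    rw [inv_le_comm₀ (by positivity) one_pos]
    simp
  set y : ℕ → EuclideanSpace ℝ (Fin n) := fun k => x + t k • (z - x) with hy
  have hyk : ∀ k, a ≤ ⟪ψ (y k), z - x⟫ + c := by
    intro k
    have h1 := hx (y k)
    have hcomb : y k = (1 - t k) • x + t k • z := by
      simp only [hy, smul_sub, sub_smul, one_smul]
      abel
    have h2 : r (y k) ≤ (((1 - t k) * a + t k * c : ℝ) : EReal) := by
      calc r (y k) ≤ ((1 - t k : ℝ) : EReal) * r x + ((t k : ℝ) : EReal) * r z := by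
            rw [hcomb]
            exact hconv x z (1 - t k) (t k) (by linarith [htle k]) (le_of_lt (htpos k))
              (by ring)
        _ = _ := by rw [ha, hc, ← EReal.coe_mul, ← EReal.coe_mul, ← EReal.coe_add]
    have h3 : ((a : ℝ) : EReal) ≤
        ((⟪ψ (y k), y k - x⟫ + ((1 - t k) * a + t k * c) : ℝ) : EReal) := by
      rw [EReal.coe_add]
      exact (ha ▸ h1).trans (add_le_add_right h2 _)
    rw [EReal.coe_le_coe_iff] at h3
    have hin : ⟪ψ (y k), y k - x⟫ = t k * ⟪ψ (y k), z - x⟫ := by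
      have : y k - x = t k • (z - x) := by simp [hy]
      rw [this, real_inner_smul_right]
    rw [hin] at h3
    have h4 : t k * a ≤ t k * (⟪ψ (y k), z - x⟫ + c) := by nlinarith [h3]
    exact (mul_le_mul_iff_right₀ (htpos k)).mp h4
  have htlim : Tendsto t atTop (nhds 0) := by
    have := tendsto_one_div_add_atTop_nhds_zero_nat (𝕜 := ℝ)
    simpa [ht, one_div] using this
  have hylim : Tendsto y atTop (nhds x) := by
    have : Tendsto (fun k => x + t k • (z - x)) atTop (nhds (x + (0 : ℝ) • (z - x))) :=
      tendsto_const_nhds.add (htlim.smul_const (z - x))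
    simpa [hy] using this
  have hdlim : Tendsto (fun k => ⟪ψ (y k), z - x⟫ + c) atTop (nhds (⟪ψ x, z - x⟫ + c)) := by
    exact (((hcont.tendsto x).comp hylim).inner tendsto_const_nhds).add tendsto_const_nhds
  exact ge_of_tendsto' hdlim hyk

end Aux

/-- The solution set `S` of `MVI(ψ, r)` is closed and convex, the minimum-norm problem
over `S` has a unique solution `x̄`, and any Tikhonov trajectory `x(η_t)` with `η_t ↓ 0`
converges to `x̄`. -/
theorem tikhonov_converges_least_norm {n : ℕ}
    (ψ : EuclideanSpace ℝ (Fin n) → EuclideanSpace ℝ (Fin n))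
    (hcont : Continuous ψ)
    (hmono : ∀ x y, 0 ≤ ⟪ψ x - ψ y, x - y⟫)
    (r : EuclideanSpace ℝ (Fin n) → EReal)
    (hbot : ∀ x, r x ≠ ⊥) (htop : ∃ x, r x ≠ ⊤)
    (hconv : ∀ x y (a b : ℝ), 0 ≤ a → 0 ≤ b → a + b = 1 →
      r (a • x + b • y) ≤ (a : EReal) * r x + (b : EReal) * r y)
    (hlsc : LowerSemicontinuous r)
    (hS : ∃ z, MVISol ψ r z) :
    IsClosed {z | MVISol ψ r z} ∧ Convex ℝ {z | MVISol ψ r z} ∧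
    ∃ xbar, MVISol ψ r xbar ∧
      (∀ z, MVISol ψ r z → ‖xbar‖ ≤ ‖z‖) ∧
      (∀ z, MVISol ψ r z → (∀ w, MVISol ψ r w → ‖z‖ ≤ ‖w‖) → z = xbar) ∧
      ∀ (η : ℕ → ℝ) (x : ℕ → EuclideanSpace ℝ (Fin n)),
        (∀ t, 0 < η t) → Filter.Tendsto η Filter.atTop (nhds 0) →
        (∀ t, MVISol (fun z => ψ z + η t • z) r (x t)) →
        Filter.Tendsto x Filter.atTop (nhds xbar) := by
  obtain ⟨y₀, hy₀⟩ := htop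
  -- closedness
  have hclosed : IsClosed {z | MVISol ψ r z} := by
    apply IsSeqClosed.isClosed
    intro xs p hmem hxlim
    refine minty_rev hcont hbot hconv hy₀ ?_
    intro y
    by_cases hyT : r y = ⊤
    · rw [hyT, EReal.coe_add_top]; exact le_top
    obtain ⟨b, hb⟩ : ∃ b : ℝ, r y = (b : EReal) :=
      ⟨(r y).toReal, (EReal.coe_toReal hyT (hbot y)).symm⟩
    rw [hb, ← EReal.coe_add]
    refine lsc_limit hlsc hxlim
      (c := fun k => ⟪ψ y, y - xs k⟫ + b) ?_ ?_
    · exact ((tendsto_const_nhds.inner (tendsto_const_nhds.sub hxlim)).add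
        tendsto_const_nhds)
    · intro k
      have h := minty_fwd hmono (hmem k) y
      rw [hb, ← EReal.coe_add] at h
      exact h
  -- convexity
  have hconvS : Convex ℝ {z | MVISol ψ r z} := by
    intro x₁ hx₁ x₂ hx₂ a b hanneg hbnneg hab
    obtain ⟨α₁, hα₁⟩ := sol_finite hbot hy₀ hx₁
    obtain ⟨α₂, hα₂⟩ := sol_finite hbot hy₀ hx₂
    refine minty_rev hcont hbot hconv hy₀ ?_
    intro y
    by_cases hyT : r y = ⊤
    · rw [hyT, EReal.coe_add_top]; exact le_top
    obtain ⟨β, hβ⟩ : ∃ β : ℝ, r y = (β : EReal) :=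
      ⟨(r y).toReal, (EReal.coe_toReal hyT (hbot y)).symm⟩
    have h1 := minty_fwd hmono hx₁ y
    have h2 := minty_fwd hmono hx₂ y
    rw [hα₁, hβ, ← EReal.coe_add, EReal.coe_le_coe_iff] at h1
    rw [hα₂, hβ, ← EReal.coe_add, EReal.coe_le_coe_iff] at h2
    have hv : a • (y - x₁) + b • (y - x₂) = y - (a • x₁ + b • x₂) := by
      rw [smul_sub, smul_sub]
      have hy' : a • y + b • y = y := by rw [← add_smul, hab, one_smul]
      rw [sub_add_sub_comm, hy']
    have hinner : a * ⟪ψ y, y - x₁⟫ + b * ⟪ψ y, y - x₂⟫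
        = ⟪ψ y, y - (a • x₁ + b • x₂)⟫ := by
      rw [← real_inner_smul_right, ← real_inner_smul_right, ← inner_add_right, hv]
    rw [hβ, ← EReal.coe_add]
    calc r (a • x₁ + b • x₂) ≤ ((a * α₁ + b * α₂ : ℝ) : EReal) := by
          have h := hconv x₁ x₂ a b hanneg hbnneg hab
          rw [hα₁, hα₂, ← EReal.coe_mul, ← EReal.coe_mul, ← EReal.coe_add] at h
          exact h
      _ ≤ _ := by
          rw [EReal.coe_le_coe_iff]
          have ha1 : a * α₁ ≤ a * (⟪ψ y, y - x₁⟫ + β) :=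
            mul_le_mul_of_nonneg_left h1 hanneg
          have ha2 : b * α₂ ≤ b * (⟪ψ y, y - x₂⟫ + β) :=
            mul_le_mul_of_nonneg_left h2 hbnneg
          have hsum : a * (⟪ψ y, y - x₁⟫ + β) + b * (⟪ψ y, y - x₂⟫ + β)
              = ⟪ψ y, y - (a • x₁ + b • x₂)⟫ + β := by
            linear_combination hinner + β * hab
          linarith [ha1, ha2, hsum]
  -- minimum norm element
  obtain ⟨z₀, hz₀⟩ := hS
  have hKc : IsCompact ({z | MVISol ψ r z} ∩ Metric.closedBall 0 ‖z₀‖) :=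
    Metric.isCompact_of_isClosed_isBounded (hclosed.inter Metric.isClosed_closedBall)
      (Metric.isBounded_closedBall.subset Set.inter_subset_right)
  have hKne : ({z | MVISol ψ r z} ∩ Metric.closedBall 0 ‖z₀‖).Nonempty :=
    ⟨z₀, hz₀, by simp [Metric.mem_closedBall]⟩
  obtain ⟨xbar, hxbarK, hmin⟩ := hKc.exists_isMinOn hKne continuous_norm.continuousOn
  have hxbarS : MVISol ψ r xbar := hxbarK.1
  have hminS : ∀ z, MVISol ψ r z → ‖xbar‖ ≤ ‖z‖ := by
    intro z hz
    by_cases hzK : z ∈ Metric.closedBall (0 : EuclideanSpace ℝ (Fin n)) ‖z₀‖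
    · exact hmin ⟨hz, hzK⟩
    · have h1 : ‖z₀‖ < ‖z‖ := by
        simpa [Metric.mem_closedBall, dist_zero_right, not_le] using hzK
      have h0 : ‖xbar‖ ≤ ‖z₀‖ := hmin ⟨hz₀, by simp [Metric.mem_closedBall]⟩
      linarith
  have huniq : ∀ z, MVISol ψ r z → (∀ w, MVISol ψ r w → ‖z‖ ≤ ‖w‖) → z = xbar := by
    intro z hz hzmin
    have h1 : ‖z‖ = ‖xbar‖ := le_antisymm (hzmin xbar hxbarS) (hminS z hz)
    have hmid : MVISol ψ r ((1/2 : ℝ) • z + (1/2 : ℝ) • xbar) :=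
      hconvS hz hxbarS (by norm_num) (by norm_num) (by norm_num)
    have h2 : ‖xbar‖ ≤ ‖(1/2 : ℝ) • z + (1/2 : ℝ) • xbar‖ := hminS _ hmid
    have h3 : ‖z + xbar‖ = 2 * ‖(1/2 : ℝ) • z + (1/2 : ℝ) • xbar‖ := by
      have hzw : z + xbar = (2 : ℝ) • ((1/2 : ℝ) • z + (1/2 : ℝ) • xbar) := by
        rw [smul_add, smul_smul, smul_smul]
        norm_num
      rw [hzw, norm_smul]
      simp
    have hge : 2 * ‖xbar‖ ≤ ‖z + xbar‖ := by rw [h3]; linarith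
    have hsq : (2 * ‖xbar‖) * (2 * ‖xbar‖) ≤ ‖z + xbar‖ * ‖z + xbar‖ :=
      mul_self_le_mul_self (by positivity) hge
    have hpar := parallelogram_law_with_norm ℝ z xbar
    rw [h1] at hpar
    have hsq0 : ‖z - xbar‖ * ‖z - xbar‖ ≤ 0 := by linarith
    have hzero : ‖z - xbar‖ = 0 :=
      mul_self_eq_zero.mp (le_antisymm hsq0 (mul_self_nonneg _))
    exact sub_eq_zero.mp (norm_eq_zero.mp hzero)
  refine ⟨hclosed, hconvS, xbar, hxbarS, hminS, huniq, ?_⟩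
  -- Tikhonov trajectory
  intro η x hηpos hη0 hsol
  have hbound : ∀ t z, MVISol ψ r z → ‖x t‖ ≤ ‖z‖ := by
    intro t z hz
    obtain ⟨a, ha⟩ := sol_finite hbot hy₀ (hsol t)
    obtain ⟨c, hc⟩ := sol_finite hbot hy₀ hz
    have h1 := hsol t z
    have h2 := hz (x t)
    rw [ha, hc, ← EReal.coe_add, EReal.coe_le_coe_iff] at h1
    rw [hc, ha, ← EReal.coe_add, EReal.coe_le_coe_iff] at h2
    have hin1 : ⟪ψ (x t) + η t • x t, z - x t⟫
        = ⟪ψ (x t), z - x t⟫ + η t * ⟪x t, z - x t⟫ := by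
      rw [inner_add_left, real_inner_smul_left]
    rw [hin1] at h1
    have hm := hmono (x t) z
    rw [inner_sub_left] at hm
    have hflip : ⟪ψ (x t), z - x t⟫ = -⟪ψ (x t), x t - z⟫ := by
      rw [← inner_neg_right, neg_sub]
    have hflip2 : ⟪ψ z, x t - z⟫ = ⟪ψ z, x t - z⟫ := rfl
    rw [hflip] at h1
    -- h1 : a ≤ -⟪ψ(x t), x t - z⟫ + η t * ⟪x t, z - x t⟫ + c
    -- h2 : c ≤ ⟪ψ z, x t - z⟫ + a
    -- hm : 0 ≤ ⟪ψ (x t), x t - z⟫ - ⟪ψ z, x t - z⟫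
    have hkey : 0 ≤ ⟪x t, z - x t⟫ := by
      have hηt := hηpos t
      nlinarith [h1, h2, hm]
    rw [inner_sub_right, real_inner_self_eq_norm_mul_norm] at hkey
    have hcs := real_inner_le_norm (x t) z
    rcases eq_or_lt_of_le (norm_nonneg (x t)) with h0 | h0
    · rw [← h0]; exact norm_nonneg z
    · exact le_of_mul_le_mul_left (by nlinarith) h0
  apply Filter.tendsto_of_subseq_tendsto
  intro ns hns
  have hbd : ∀ t, x t ∈ Metric.closedBall (0 : EuclideanSpace ℝ (Fin n)) ‖xbar‖ := by
    intro t
    simpa [Metric.mem_closedBall, dist_zero_right] using hbound t xbar hxbarS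
  obtain ⟨a, -, φ, hφ, hlim⟩ := tendsto_subseq_of_bounded Metric.isBounded_closedBall
    (fun k => hbd (ns k))
  refine ⟨φ, ?_⟩
  have hηsub : Tendsto (fun k => η (ns (φ k))) atTop (nhds 0) :=
    hη0.comp (hns.comp hφ.tendsto_atTop)
  have hlim' : Tendsto (fun k => x (ns (φ k))) atTop (nhds a) := hlim
  have haS : MVISol ψ r a := by
    refine minty_rev hcont hbot hconv hy₀ ?_
    intro y
    by_cases hyT : r y = ⊤
    · rw [hyT, EReal.coe_add_top]; exact le_top
    obtain ⟨b, hb⟩ : ∃ b : ℝ, r y = (b : EReal) :=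
      ⟨(r y).toReal, (EReal.coe_toReal hyT (hbot y)).symm⟩
    rw [hb, ← EReal.coe_add]
    refine lsc_limit hlsc hlim'
      (c := fun k => ⟪ψ y, y - x (ns (φ k))⟫
        + η (ns (φ k)) * ⟪x (ns (φ k)), y - x (ns (φ k))⟫ + b) ?_ ?_
    · have h1 : Tendsto (fun k => ⟪ψ y, y - x (ns (φ k))⟫) atTop
          (nhds ⟪ψ y, y - a⟫) :=
        tendsto_const_nhds.inner (tendsto_const_nhds.sub hlim')
      have h2 : Tendsto (fun k => η (ns (φ k)) * ⟪x (ns (φ k)), y - x (ns (φ k))⟫)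
          atTop (nhds (0 * ⟪a, y - a⟫)) :=
        hηsub.mul (hlim'.inner (tendsto_const_nhds.sub hlim'))
      have := (h1.add h2).add (tendsto_const_nhds (x := b))
      simpa using this
    · intro k
      have h := hsol (ns (φ k)) y
      rw [hb] at h
      have hin : ⟪ψ (x (ns (φ k))) + η (ns (φ k)) • x (ns (φ k)), y - x (ns (φ k))⟫
          = ⟪ψ (x (ns (φ k))), y - x (ns (φ k))⟫
            + η (ns (φ k)) * ⟪x (ns (φ k)), y - x (ns (φ k))⟫ := by
        rw [inner_add_left, real_inner_smul_left]
      rw [hin, ← EReal.coe_add] at h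
      refine h.trans (EReal.coe_le_coe_iff.mpr ?_)
      have hm := hmono y (x (ns (φ k)))
      rw [inner_sub_left] at hm
      beta_reduce
      linarith
  have hanorm : ‖a‖ ≤ ‖xbar‖ := by
    have hn : Tendsto (fun k => ‖x (ns (φ k))‖) atTop (nhds ‖a‖) := hlim'.norm
    exact le_of_tendsto hn (Eventually.of_forall fun k => hbound _ xbar hxbarS)
  have hax : a = xbar := huniq a haS (fun w hw => hanorm.trans (hminS w hw))
  exact hax ▸ hlim'
end

section
/- Under the same setting, if additionally x ↦ h(x) = g(x, y(x)) is L₁-Lipschitz, then the second moment of the inexact estimator satisfies E[‖H^{δ,ε}_x(W)‖² | x] ≤ 3(n/δ)²(2L₂²ε² + L₁²δ²), where the inexactness satisfies the stronger bound E[‖y^ε(z) - y(z)‖² | z] ≤ ε². -/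
open MeasureTheory

/-- Second moment of the inexact spherical estimator: if moreover
`h(x) = g(x, y(x))` is `L₁`-Lipschitz and `E[‖y^ε(z) - y(z)‖²] ≤ ε²`, then
`E[‖H^{δ,ε}_x(w)‖²] ≤ 3 (n/δ)² (2 L₂² ε² + L₁² δ²)` for every unit vector `w`. -/
theorem inexact_estimator_second_moment {n m : ℕ}
    {Ω : Type*} [MeasurableSpace Ω] (μ : Measure Ω) [IsProbabilityMeasure μ]
    (g : EuclideanSpace ℝ (Fin n) → EuclideanSpace ℝ (Fin m) → ℝ)
    (L₂ : NNReal) (hg : ∀ x, LipschitzWith L₂ (g x))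
    (y : EuclideanSpace ℝ (Fin n) → EuclideanSpace ℝ (Fin m))
    (yeps : EuclideanSpace ℝ (Fin n) → Ω → EuclideanSpace ℝ (Fin m))
    (L₁ : NNReal) (hL₁ : LipschitzWith L₁ (fun z => g z (y z)))
    (ε : ℝ) (hε : 0 ≤ ε)
    (hint : ∀ z, Integrable (fun ω => ‖yeps z ω - y z‖ ^ 2) μ)
    (hinexact : ∀ z, ∫ ω, ‖yeps z ω - y z‖ ^ 2 ∂μ ≤ ε ^ 2)
    {δ : ℝ} (hδ : 0 < δ)
    (x w : EuclideanSpace ℝ (Fin n)) (hw : ‖w‖ = 1) :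
    ∫ ω, ‖((n : ℝ) / δ) • ((g (x + δ • w) (yeps (x + δ • w) ω) - g x (yeps x ω)) • w)‖ ^ 2 ∂μ
      ≤ 3 * ((n : ℝ) / δ) ^ 2 * (2 * L₂ ^ 2 * ε ^ 2 + L₁ ^ 2 * δ ^ 2) := by
  set z := x + δ • w with hz
  set r : ℝ := (n : ℝ) / δ with hr
  set c₁ : ℝ := 3 * r ^ 2 * L₂ ^ 2 with hc₁
  set c₂ : ℝ := 3 * r ^ 2 * (L₁ ^ 2 * δ ^ 2) with hc₂
  have hc₁0 : 0 ≤ c₁ := by positivity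
  -- the dominating function
  have hBle : |g z (y z) - g x (y x)| ≤ (L₁ : ℝ) * δ := by
    have := hL₁.dist_le_mul z x
    simp only [Real.dist_eq] at this
    calc |g z (y z) - g x (y x)| ≤ (L₁ : ℝ) * dist z x := this
      _ = (L₁ : ℝ) * δ := by
          rw [hz]
          have : dist (x + δ • w) x = ‖δ • w‖ := by
            rw [dist_eq_norm, add_sub_cancel_left]
          rw [this, norm_smul, hw, Real.norm_eq_abs, abs_of_pos hδ, mul_one]
  have hptwise : ∀ ω,
      ‖r • ((g z (yeps z ω) - g x (yeps x ω)) • w)‖ ^ 2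
        ≤ c₁ * ‖yeps z ω - y z‖ ^ 2 + c₂ + c₁ * ‖yeps x ω - y x‖ ^ 2 := by
    intro ω
    have hnorm : ‖r • ((g z (yeps z ω) - g x (yeps x ω)) • w)‖
        = |r| * |g z (yeps z ω) - g x (yeps x ω)| := by
      rw [norm_smul, norm_smul, hw, Real.norm_eq_abs, Real.norm_eq_abs, mul_one]
    set A := g z (yeps z ω) - g z (y z) with hA
    set B := g z (y z) - g x (y x) with hB
    set C := g x (y x) - g x (yeps x ω) with hC
    have hAle : |A| ≤ (L₂ : ℝ) * ‖yeps z ω - y z‖ := by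
      have := (hg z).dist_le_mul (yeps z ω) (y z)
      simpa [Real.dist_eq, dist_eq_norm] using this
    have hCle : |C| ≤ (L₂ : ℝ) * ‖yeps x ω - y x‖ := by
      have := (hg x).dist_le_mul (y x) (yeps x ω)
      have h2 : dist (y x) (yeps x ω) = ‖yeps x ω - y x‖ := by
        rw [dist_eq_norm, ← norm_neg, neg_sub]
      simpa [Real.dist_eq, h2] using this
    have hsum : g z (yeps z ω) - g x (yeps x ω) = A + B + C := by ring
    rw [hnorm, hsum, mul_pow, sq_abs, sq_abs]
    have hA2 : A ^ 2 ≤ ((L₂ : ℝ) * ‖yeps z ω - y z‖) ^ 2 := by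
      rw [← sq_abs]; exact pow_le_pow_left₀ (abs_nonneg _) hAle 2
    have hB2 : B ^ 2 ≤ ((L₁ : ℝ) * δ) ^ 2 := by
      rw [← sq_abs]; exact pow_le_pow_left₀ (abs_nonneg _) hBle 2
    have hC2 : C ^ 2 ≤ ((L₂ : ℝ) * ‖yeps x ω - y x‖) ^ 2 := by
      rw [← sq_abs]; exact pow_le_pow_left₀ (abs_nonneg _) hCle 2
    have h3 : (A + B + C) ^ 2 ≤ 3 * (A ^ 2 + B ^ 2 + C ^ 2) := by
      nlinarith [sq_nonneg (A - B), sq_nonneg (B - C), sq_nonneg (A - C)]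
    calc r ^ 2 * (A + B + C) ^ 2
        ≤ r ^ 2 * (3 * (A ^ 2 + B ^ 2 + C ^ 2)) := by
          apply mul_le_mul_of_nonneg_left h3 (by positivity)
      _ ≤ r ^ 2 * (3 * (((L₂ : ℝ) * ‖yeps z ω - y z‖) ^ 2 + ((L₁ : ℝ) * δ) ^ 2
            + ((L₂ : ℝ) * ‖yeps x ω - y x‖) ^ 2)) := by
          apply mul_le_mul_of_nonneg_left (by linarith) (by positivity)
      _ = c₁ * ‖yeps z ω - y z‖ ^ 2 + c₂ + c₁ * ‖yeps x ω - y x‖ ^ 2 := by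
          simp only [hc₁, hc₂]; ring
  -- integrability of the dominating function
  have hint1 := hint z
  have hint2 := hint x
  have hintdom : Integrable (fun ω =>
      c₁ * ‖yeps z ω - y z‖ ^ 2 + c₂ + c₁ * ‖yeps x ω - y x‖ ^ 2) μ :=
    ((hint1.const_mul c₁).add (integrable_const c₂)).add (hint2.const_mul c₁)
  calc ∫ ω, ‖r • ((g z (yeps z ω) - g x (yeps x ω)) • w)‖ ^ 2 ∂μ
      ≤ ∫ ω, (c₁ * ‖yeps z ω - y z‖ ^ 2 + c₂ + c₁ * ‖yeps x ω - y x‖ ^ 2) ∂μ := by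
        apply integral_mono_of_nonneg
        · exact Filter.Eventually.of_forall fun ω => by positivity
        · exact hintdom
        · exact Filter.Eventually.of_forall hptwise
    _ = c₁ * (∫ ω, ‖yeps z ω - y z‖ ^ 2 ∂μ) + c₂ + c₁ * (∫ ω, ‖yeps x ω - y x‖ ^ 2 ∂μ) := by
        have h1 := integral_add (μ := μ) ((hint1.const_mul c₁).add (integrable_const c₂))
          (hint2.const_mul c₁)
        have h2 := integral_add (μ := μ) (hint1.const_mul c₁) (integrable_const c₂)
        simp only [Pi.add_apply] at h1 h2
        rw [h1, h2, integral_const_mul, integral_const_mul, integral_const, probReal_univ]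
        simp [integral_const_mul, hc₂]
    _ ≤ c₁ * ε ^ 2 + c₂ + c₁ * ε ^ 2 := by
        have h1 := hinexact z
        have h2 := hinexact x
        have := mul_le_mul_of_nonneg_left h1 hc₁0
        have := mul_le_mul_of_nonneg_left h2 hc₁0
        linarith
    _ = 3 * r ^ 2 * (2 * L₂ ^ 2 * ε ^ 2 + L₁ ^ 2 * δ ^ 2) := by
        simp only [hc₁, hc₂]; ring
end
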